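/- arXiv:math/0501014 — 3 statements merged into one kernel-verified Lean document; each statement's English description precedes it below -/
import Mathlib

section
/- For each nonempty λ ⊆ {1,…,N} there exists a unit vector n^λ ∈ ℝ^n such that n^λ ∈ n(x) for every x ∈ G with In(x) = λ, and ⟨n^λ, d_i⟩ > 0 for all i ∈ λ, where n(x) = {ν ∈ ℝ^n : |ν| = 1 and ⟨ν, x − y⟩ ≤ 0 for all y ∈ G} is the set of inward normals to G at x. -/
open MeasureTheory Set Metric Filter Topology RealInnerProductSpace
open scoped Classical ENNReal

noncomputable section

abbrev Evec (n : ℕ) : Type := EuclideanSpace ℝ (Fin n)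

variable {n N : ℕ}

/-- The cone generated by the vectors `v i`, `i ∈ lam`. -/
def coneGen (v : Fin N → Evec n) (lam : Set (Fin N)) : Set (Evec n) :=
  {y | ∃ c : Fin N → ℝ, (∀ i, 0 ≤ c i) ∧ (∀ i, i ∉ lam → c i = 0) ∧ y = ∑ i, c i • v i}

/-- The polyhedral cone `G = ⋂ i {x : ⟨x, n_i⟩ ≥ 0}`. -/
def Gset (nv : Fin N → Evec n) : Set (Evec n) :=
  {x | ∀ i, 0 ≤ ⟪x, nv i⟫}

/-- `In(x) = {i : ⟨x, n_i⟩ = 0}`. -/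
def inIdx (nv : Fin N → Evec n) (x : Evec n) : Set (Fin N) :=
  {i | ⟪x, nv i⟫ = 0}

/-- The constraint directions `d(x) = cone{d_i, i ∈ In(x)} ∩ S^{n-1}`. -/
def dDir (nv dv : Fin N → Evec n) (x : Evec n) : Set (Evec n) :=
  coneGen dv (inIdx nv x) ∩ sphere (0 : Evec n) 1

/-- The set of inward normals to `G` at `x`. -/
def nSet (nv : Fin N → Evec n) (x : Evec n) : Set (Evec n) :=
  {ν | ‖ν‖ = 1 ∧ ∀ y ∈ Gset nv, ⟪ν, x - y⟫ ≤ 0}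

/-- The origin is a proper vertex of `G`. -/
def ProperVertex (nv : Fin N → Evec n) : Prop :=
  ∃ a0 : Evec n, ‖a0‖ = 1 ∧ IsCompact {x : Evec n | x ∈ Gset nv ∧ ⟪x, a0⟫ ≤ 1}

/-- Condition 2.1 (existence form). -/
def Cond21 (nv dv : Fin N → Evec n) : Prop :=
  ∀ lam : Set (Fin N), lam.Nonempty →
    ∃ dl ∈ coneGen dv lam, ∀ i ∈ lam, 0 < ⟪dl, nv i⟫

/-- Condition 2.1 with a fixed choice `d^λ = dlam λ` for each nonempty `λ`. -/
def Cond21At (nv dv : Fin N → Evec n) (dlam : Set (Fin N) → Evec n) : Prop :=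
  ∀ lam : Set (Fin N), lam.Nonempty →
    dlam lam ∈ coneGen dv lam ∧ ∀ i ∈ lam, 0 < ⟪dlam lam, nv i⟫

/-- The cone `C = cone{-d_i, i = 1,…,N}`. -/
def Cset (dv : Fin N → Evec n) : Set (Evec n) :=
  coneGen (fun i => -dv i) Set.univ

/-- Right continuous with left limits on `[0,∞)`. -/
def Cadlag (f : ℝ → Evec n) : Prop :=
  (∀ t : ℝ, 0 ≤ t → ContinuousWithinAt f (Ici t) t) ∧
  ∀ t : ℝ, 0 < t → ∃ l : Evec n, Tendsto f (𝓝[<] t) (𝓝 l)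

/-- `(φ, η)` solves the Skorohod problem for `ψ` with respect to `(G, d)`. -/
structure SPsol (nv dv : Fin N → Evec n) (ψ φ η : ℝ → Evec n) : Prop where
  init : φ 0 = ψ 0
  decomp : ∀ t : ℝ, 0 ≤ t → φ t = ψ t + η t
  memG : ∀ t : ℝ, 0 ≤ t → φ t ∈ Gset nv
  finVar : ∀ t : ℝ, 0 ≤ t → eVariationOn η (Icc 0 t) ≠ ⊤
  varMeasure : ∃ μ : Measure ℝ,
    (∀ t : ℝ, 0 ≤ t → μ (Icc 0 t) = eVariationOn η (Icc 0 t)) ∧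
    (∀ t : ℝ, 0 ≤ t → μ (Icc 0 t) = μ {s | s ∈ Icc 0 t ∧ φ s ∈ frontier (Gset nv)}) ∧
    ∃ γ : ℝ → Evec n, Measurable γ ∧ (∀ᵐ s ∂μ, γ s ∈ dDir nv dv (φ s)) ∧
      ∀ t : ℝ, 0 ≤ t → η t = ∫ s in Icc 0 t, γ s ∂μ

/-- Condition 2.2: the Skorohod map `Γ` is well defined on all cadlag paths starting
in `G` (existence and uniqueness of solutions of the SP) and is Lipschitz with
constant `ℓ` in the uniform metric. -/
def Cond22 (nv dv : Fin N → Evec n) (Γ : (ℝ → Evec n) → ℝ → Evec n) (ℓ : ℝ) : Prop :=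
  (∀ ψ, Cadlag ψ → ψ 0 ∈ Gset nv → ∃ η, SPsol nv dv ψ (Γ ψ) η) ∧
  (∀ ψ φ₁ η₁ φ₂ η₂, Cadlag ψ → ψ 0 ∈ Gset nv →
      SPsol nv dv ψ φ₁ η₁ → SPsol nv dv ψ φ₂ η₂ → ∀ t : ℝ, 0 ≤ t → φ₁ t = φ₂ t) ∧
  ∀ ψ₁ ψ₂, Cadlag ψ₁ → ψ₁ 0 ∈ Gset nv → Cadlag ψ₂ → ψ₂ 0 ∈ Gset nv →
    ∀ M : ℝ, (∀ t : ℝ, 0 ≤ t → ‖ψ₁ t - ψ₂ t‖ ≤ M) →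
      ∀ t : ℝ, 0 ≤ t → ‖Γ ψ₁ t - Γ ψ₂ t‖ ≤ ℓ * M

/-- The face `F_i = ∂G ∩ ∂G_i`. -/
def Fface (nv : Fin N → Evec n) (i : Fin N) : Set (Evec n) :=
  frontier (Gset nv) ∩ frontier {x : Evec n | 0 ≤ ⟪x, nv i⟫}

/-- `v(β,x) = β` on `G`, `= d^{λ(x)}` off `G`, with `λ(x) = {i : ⟨x,n_i⟩ ≤ 0}`. -/
def vRaw (nv : Fin N → Evec n) (dlam : Set (Fin N) → Evec n) (β x : Evec n) : Evec n :=
  if x ∈ Gset nv then β else dlam {i | ⟪x, nv i⟫ ≤ 0}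

/-- The mollified field `v^a(β,x)`. -/
def vMoll (nv : Fin N → Evec n) (dlam : Set (Fin N) → Evec n) (ρ : Evec n → ℝ)
    (a : ℝ) (β x : Evec n) : Evec n :=
  ((a * ‖x‖) ^ n)⁻¹ • ∫ y : Evec n, ρ ((a * ‖x‖)⁻¹ • (x - y)) • vRaw nv dlam β y

/-- The fields `v_i^a(β,x)`, `i = 0,1,…,N` (index `0` is `v_0^a`). -/
def vA (nv dv : Fin N → Evec n) (dlam : Set (Fin N) → Evec n) (ρ : Evec n → ℝ)
    (g : ℝ → ℝ) (a : ℝ) (β x : Evec n) : Fin (N + 1) → Evec n := fun i =>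
  if x = 0 then 0 else
    (Fin.cons
      (g (infDist x (Gset nv) / (a * ‖x‖)) • β +
        (1 - g (infDist x (Gset nv) / (a * ‖x‖))) • vMoll nv dlam ρ a β x)
      (fun j : Fin N =>
        g (infDist x (Fface nv j) / (a * ‖x‖)) • dv j +
          (1 - g (infDist x (Fface nv j) / (a * ‖x‖))) • vMoll nv dlam ρ a β x) :
      Fin (N + 1) → Evec n) i

/-- `K^a(β,x) = conv{v_i^a(β,x) : i = 0,…,N}`. -/
def KaB (nv dv : Fin N → Evec n) (dlam : Set (Fin N) → Evec n) (ρ : Evec n → ℝ)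
    (g : ℝ → ℝ) (a : ℝ) (β x : Evec n) : Set (Evec n) :=
  convexHull ℝ (Set.range (vA nv dv dlam ρ g a β x))

/-- `K^a(x) = ⋃_{β ∈ C₁} K^a(β,x)`. -/
def Ka (nv dv : Fin N → Evec n) (dlam : Set (Fin N) → Evec n) (ρ : Evec n → ℝ)
    (g : ℝ → ℝ) (C1 : Set (Evec n)) (a : ℝ) (x : Evec n) : Set (Evec n) :=
  ⋃ β ∈ C1, KaB nv dv dlam ρ g a β x

/-- `φ` is an absolutely continuous solution on `[0,∞)` of the differential
inclusion `φ' ∈ K(φ)`. -/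
def DIsol (K : Evec n → Set (Evec n)) (φ : ℝ → Evec n) : Prop :=
  ∃ φ' : ℝ → Evec n,
    (∀ t : ℝ, 0 ≤ t → IntegrableOn φ' (Icc 0 t)) ∧
    (∀ t : ℝ, 0 ≤ t → φ t = φ 0 + ∫ s in Icc 0 t, φ' s) ∧
    ∀ᵐ s ∂(volume.restrict (Ici (0 : ℝ))), φ' s ∈ K (φ s)

/-- `V^a(x)`, as an extended nonnegative real. -/
def VfunE (nv dv : Fin N → Evec n) (dlam : Set (Fin N) → Evec n) (ρ : Evec n → ℝ)
    (g ηf : ℝ → ℝ) (C1 : Set (Evec n)) (a : ℝ) (x : Evec n) : ℝ≥0∞ :=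
  ⨆ φ : {φ : ℝ → Evec n // φ 0 = x ∧ DIsol (Ka nv dv dlam ρ g C1 a) φ},
    ∫⁻ t in Ici (0 : ℝ), ENNReal.ofReal (ηf ‖φ.1 t‖)

/-- `V^a(x)` as a real number. -/
def Vfun (nv dv : Fin N → Evec n) (dlam : Set (Fin N) → Evec n) (ρ : Evec n → ℝ)
    (g ηf : ℝ → ℝ) (C1 : Set (Evec n)) (a : ℝ) (x : Evec n) : ℝ :=
  (VfunE nv dv dlam ρ g ηf C1 a x).toReal

/-- The limit set `K(x)` of the sets `K^{a_k}(x_k)` as `a_k → 0`, `x_k → x`. -/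
def Kzero (nv dv : Fin N → Evec n) (dlam : Set (Fin N) → Evec n) (ρ : Evec n → ℝ)
    (g : ℝ → ℝ) (C1 : Set (Evec n)) (x : Evec n) : Set (Evec n) :=
  {v | ∃ (as : ℕ → ℝ) (xs vs : ℕ → Evec n),
    (∀ k, as k ∈ Ioc (0 : ℝ) 1) ∧
    (∀ k, vs k ∈ Ka nv dv dlam ρ g C1 (as k) (xs k)) ∧
    Tendsto as atTop (𝓝 0) ∧ Tendsto xs atTop (𝓝 x) ∧ Tendsto vs atTop (𝓝 v)}

/-- `K̄(x)`, the closed convex hull of `K(x)`. -/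
def Kbar (nv dv : Fin N → Evec n) (dlam : Set (Fin N) → Evec n) (ρ : Evec n → ℝ)
    (g : ℝ → ℝ) (C1 : Set (Evec n)) (x : Evec n) : Set (Evec n) :=
  closure (convexHull ℝ (Kzero nv dv dlam ρ g C1 x))

/-- `δ₀ = inf{⟨d^λ, n_i⟩ : λ nonempty, i ∈ λ}`. -/
def delta0 (nv : Fin N → Evec n) (dlam : Set (Fin N) → Evec n) : ℝ :=
  sInf {r | ∃ (lam : Set (Fin N)) (i : Fin N), lam.Nonempty ∧ i ∈ lam ∧ r = ⟪dlam lam, nv i⟫}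


open Finset in
private lemma keyQ_aux {N : ℕ} (A : Fin N → Fin N → ℝ)
    (hS : ∀ lam' : Set (Fin N), lam'.Nonempty →
      ∃ c : Fin N → ℝ, (∀ i, 0 ≤ c i) ∧ (∀ i, i ∉ lam' → c i = 0) ∧
        ∀ i ∈ lam', 0 < ∑ j, c j * A i j) :
    ∀ m : ℕ, ∀ lamF : Finset (Fin N), lamF.card ≤ m →
      ∀ z : Fin N → ℝ, (∀ i, 0 ≤ z i) → (∀ i, i ∉ lamF → z i = 0) →
      (∀ i ∈ lamF, ∑ j, A i j * z j ≤ 0) → z = 0 := by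
  classical
  intro m
  induction m with
  | zero =>
    intro lamF hcard z _ hsupp _
    have hlam : lamF = ∅ := Finset.card_eq_zero.mp (Nat.le_zero.mp hcard)
    funext i
    exact hsupp i (by simp [hlam])
  | succ m ih =>
    intro lamF hcard z hz0 hsupp hineq
    by_contra hz
    have hzx : ∃ i, z i ≠ 0 := by
      by_contra h; push_neg at h; exact hz (funext h)
    set S : Finset (Fin N) := Finset.univ.filter (fun i => z i ≠ 0) with hSdef
    have hmemS : ∀ i, i ∈ S ↔ z i ≠ 0 := by intro i; simp [hSdef]
    have hSsub : S ⊆ lamF := fun i hi => by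
      by_contra h; exact (hmemS i).mp hi (hsupp i h)
    obtain ⟨i₀, hi₀⟩ := hzx
    have hi₀S : i₀ ∈ S := (hmemS i₀).mpr hi₀
    obtain ⟨c, hc0, hcsupp, hcpos⟩ := hS (↑S) ⟨i₀, Finset.mem_coe.mpr hi₀S⟩
    have hcposS : ∀ i ∈ S, 0 < ∑ j, c j * A i j := fun i hi =>
      hcpos i (Finset.mem_coe.mpr hi)
    have hcsupp' : ∀ i, i ∉ S → c i = 0 := fun i hi =>
      hcsupp i (fun h => hi (Finset.mem_coe.mp h))
    have hcne : ∃ j, c j ≠ 0 := by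
      by_contra h; push_neg at h
      have := hcposS i₀ hi₀S
      simp [h] at this
    set Sα : Finset (Fin N) := S.filter (fun j => c j ≠ 0) with hSa
    have hSαne : Sα.Nonempty := by
      obtain ⟨j, hj⟩ := hcne
      have hjS : j ∈ S := by by_contra h; exact hj (hcsupp' j h)
      exact ⟨j, by simp [hSa, hjS, hj]⟩
    have hSαprop : ∀ j ∈ Sα, 0 < c j ∧ 0 < z j := by
      intro j hj
      rw [hSa, Finset.mem_filter] at hj
      exact ⟨lt_of_le_of_ne (hc0 j) (Ne.symm hj.2),
        lt_of_le_of_ne (hz0 j) (Ne.symm ((hmemS j).mp hj.1))⟩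
    set t : ℝ := Sα.inf' hSαne (fun j => z j / c j) with ht
    have htpos : 0 < t := by
      rw [ht, Finset.lt_inf'_iff]
      intro j hj
      exact div_pos (hSαprop j hj).2 (hSαprop j hj).1
    obtain ⟨k, hkSα, hkt⟩ := Finset.exists_mem_eq_inf' hSαne (fun j => z j / c j)
    have hkS : k ∈ S := Finset.mem_of_mem_filter k hkSα
    set w : Fin N → ℝ := fun j => z j - t * c j with hw
    have hw0 : ∀ j, 0 ≤ w j := by
      intro j
      by_cases hcj : c j = 0
      · simpa [hw, hcj] using hz0 j
      · have hjS : j ∈ S := by by_contra h; exact hcj (hcsupp' j h)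
        have hjSα : j ∈ Sα := by simp [hSa, hjS, hcj]
        have hle : t ≤ z j / c j := by rw [ht]; exact Finset.inf'_le _ hjSα
        have hcjpos : 0 < c j := (hSαprop j hjSα).1
        have : t * c j ≤ z j := by
          rw [le_div_iff₀ hcjpos] at hle; linarith [hle]
        simp only [hw]; linarith
    have hwk : w k = 0 := by
      have hck : c k ≠ 0 := (hSαprop k hkSα).1.ne'
      simp only [hw]
      rw [ht, hkt, div_mul_cancel₀ _ hck, sub_self]
    have hwsupp : ∀ j, j ∉ S.erase k → w j = 0 := by
      intro j hj
      by_cases hjk : j = k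
      · rw [hjk]; exact hwk
      · have hjS : j ∉ S := fun h => hj (Finset.mem_erase.mpr ⟨hjk, h⟩)
        have hzj : z j = 0 := by
          by_contra h; exact hjS ((hmemS j).mpr h)
        simp [hw, hzj, hcsupp' j hjS]
    have hAw : ∀ i ∈ S, ∑ j, A i j * w j < 0 := by
      intro i hi
      have h1 : ∑ j, A i j * w j = (∑ j, A i j * z j) - t * ∑ j, c j * A i j := by
        rw [Finset.mul_sum, ← Finset.sum_sub_distrib]
        apply Finset.sum_congr rfl
        intro j _
        simp only [hw]; ring
      rw [h1]
      have h2 := hineq i (hSsub hi)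
      have h3 := hcposS i hi
      nlinarith
    have hcard' : (S.erase k).card ≤ m := by
      have h1 : S.card ≤ m + 1 := le_trans (Finset.card_le_card hSsub) hcard
      have h2 : (S.erase k).card = S.card - 1 := Finset.card_erase_of_mem hkS
      omega
    have hweq := ih (S.erase k) hcard' w hw0 hwsupp
      (fun i hi => (hAw i (Finset.mem_of_mem_erase hi)).le)
    have hcontra := hAw i₀ hi₀S
    rw [hweq] at hcontra
    simp at hcontra

private lemma ville_aux {N : ℕ} (A : Fin N → Fin N → ℝ) (lam : Set (Fin N))
    (hS : ∀ lam' : Set (Fin N), lam'.Nonempty →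
      ∃ c : Fin N → ℝ, (∀ i, 0 ≤ c i) ∧ (∀ i, i ∉ lam' → c i = 0) ∧
        ∀ i ∈ lam', 0 < ∑ j, c j * A i j) :
    ∃ cc : Fin N → ℝ, (∀ i, 0 ≤ cc i) ∧ (∀ i, i ∉ lam → cc i = 0) ∧
      ∀ j ∈ lam, 0 < ∑ i, cc i * A i j := by
  classical
  by_contra hvc
  push_neg at hvc
  -- Setup for separation in the space `Fin N → ℝ`
  set Scone : Set (Fin N → ℝ) := {c | (∀ i, 0 ≤ c i) ∧ ∀ i, i ∉ lam → c i = 0} with hScone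
  set F : (Fin N → ℝ) → (Fin N → ℝ) := fun c j => ∑ i, c i * A i j with hF
  have hFadd : ∀ c c', F (c + c') = F c + F c' := by
    intro c c'; funext j
    simp [hF, add_mul, Finset.sum_add_distrib]
  have hFsmul : ∀ (r : ℝ) c, F (r • c) = r • F c := by
    intro r c; funext j
    simp [hF, Finset.mul_sum, mul_assoc]
  set Sopen : Set (Fin N → ℝ) := {x | ∀ j ∈ lam, 0 < x j} with hSopen
  have hopen : IsOpen Sopen := by
    have : Sopen = ⋂ j ∈ lam, {x : Fin N → ℝ | 0 < x j} := by
      ext x; simp [hSopen]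
    rw [this]
    exact (Set.toFinite lam).isOpen_biInter
      (fun j _ => isOpen_lt continuous_const (continuous_apply j))
  have hconvS : Convex ℝ Sopen := by
    intro x hx y hy a b ha hb hab
    intro j hj
    have hxj := hx j hj
    have hyj := hy j hj
    simp only [Pi.add_apply, Pi.smul_apply, smul_eq_mul]
    rcases eq_or_lt_of_le ha with h | h
    · have hb1 : b = 1 := by linarith
      simpa [← h, hb1] using hyj
    · exact add_pos_of_pos_of_nonneg (mul_pos h hxj) (mul_nonneg hb hyj.le)
  have hconvT : Convex ℝ (F '' Scone) := by
    rintro x ⟨c, hc, rfl⟩ y ⟨c', hc', rfl⟩ a b ha hb hab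
    refine ⟨a • c + b • c', ⟨fun i => ?_, fun i hi => ?_⟩, ?_⟩
    · simp only [Pi.add_apply, Pi.smul_apply, smul_eq_mul]
      exact add_nonneg (mul_nonneg ha (hc.1 i)) (mul_nonneg hb (hc'.1 i))
    · simp [hc.2 i hi, hc'.2 i hi]
    · rw [hFadd, hFsmul, hFsmul]
  have hdisj : Disjoint Sopen (F '' Scone) := by
    rw [Set.disjoint_left]
    rintro x hxS ⟨c, hc, rfl⟩
    obtain ⟨j, hj, hle⟩ := hvc c hc.1 hc.2
    exact absurd (hxS j hj) (not_lt.mpr hle)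
  obtain ⟨f, u, hf1, hf2⟩ := geometric_hahn_banach_open hconvS hopen hconvT hdisj
  have hu0 : u ≤ 0 := by
    have h0 : (0 : Fin N → ℝ) ∈ F '' Scone := by
      refine ⟨0, ⟨fun i => le_refl 0, fun i _ => rfl⟩, ?_⟩
      funext j; simp [hF]
    simpa using hf2 0 h0
  set ones : Fin N → ℝ := fun _ => 1 with hones
  have honesS : ones ∈ Sopen := fun j _ => one_pos
  have hfones : f ones < 0 := lt_of_lt_of_le (hf1 ones honesS) hu0
  set y : Fin N → ℝ := fun i => f (fun j => if i = j then (1 : ℝ) else 0) with hy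
  have hdecomp : ∀ x : Fin N → ℝ, f x = ∑ i, x i * y i := by
    intro x
    conv_lhs => rw [pi_eq_sum_univ x]
    rw [map_sum]
    refine Finset.sum_congr rfl fun i _ => ?_
    rw [_root_.map_smul, smul_eq_mul, hy]
  -- off-lam coordinates of f vanish
  have hyoff : ∀ j, j ∉ lam → y j = 0 := by
    intro j hj
    by_contra hne
    have hmem : ones + ((1 - f ones) / y j) • (fun k => if j = k then (1 : ℝ) else 0)
        ∈ Sopen := by
      intro k hk
      have hkj : j ≠ k := fun h => hj (h ▸ hk)
      simp [hones, Pi.add_apply, Pi.smul_apply, hkj]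
    have hyj : y j = f fun k => if j = k then (1 : ℝ) else 0 := by simp only [hy]
    have hlt := hf1 _ hmem
    rw [map_add, _root_.map_smul, smul_eq_mul, ← hyj] at hlt
    rw [div_mul_cancel₀ _ hne] at hlt
    linarith
  -- lam coordinates of f are nonpositive
  have hyneg : ∀ j, j ∈ lam → y j ≤ 0 := by
    intro j hj
    by_contra hp
    push_neg at hp
    set ε : ℝ := y j / (2 * (1 + |f ones|)) with hε
    have habs : (0:ℝ) ≤ |f ones| := abs_nonneg _
    have hεpos : 0 < ε := by
      rw [hε]; positivity
    have hmem : (fun k => if j = k then (1 : ℝ) else 0) + ε • ones ∈ Sopen := by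
      intro k hk
      by_cases hkj : j = k
      · simp only [hones, Pi.add_apply, Pi.smul_apply, smul_eq_mul, hkj, if_pos rfl, if_true,
          eq_self_iff_true, mul_one]
        linarith
      · simp only [hones, Pi.add_apply, Pi.smul_apply, smul_eq_mul, if_neg hkj, mul_one]
        linarith
    have hyj : y j = f fun k => if j = k then (1 : ℝ) else 0 := by simp only [hy]
    have hlt := hf1 _ hmem
    rw [map_add, _root_.map_smul, smul_eq_mul, ← hyj] at hlt
    have h1 : ε * |f ones| < y j := by
      rw [hε, div_mul_eq_mul_div, div_lt_iff₀ (by linarith)]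
      nlinarith
    have h2 : -(ε * |f ones|) ≤ ε * f ones := by
      have := mul_le_mul_of_nonneg_left (neg_abs_le (f ones)) hεpos.le
      linarith [this]
    linarith
  -- positivity of f on the image cone
  have hfb : ∀ c ∈ Scone, 0 ≤ f (F c) := by
    intro c hc
    by_contra hneg
    push_neg at hneg
    set t : ℝ := (u - 1) / f (F c) with htdef
    have htpos : 0 < t := div_pos_of_neg_of_neg (by linarith) hneg
    have hmem : F (t • c) ∈ F '' Scone := by
      refine ⟨t • c, ⟨fun i => ?_, fun i hi => ?_⟩, rfl⟩
      · exact mul_nonneg htpos.le (hc.1 i)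
      · simp [hc.2 i hi]
    have := hf2 _ hmem
    rw [hFsmul, _root_.map_smul, smul_eq_mul, htdef, div_mul_cancel₀ _ hneg.ne] at this
    linarith
  -- build z and contradict keyQ
  set z : Fin N → ℝ := fun j => if j ∈ lam then -(y j) else 0 with hz
  have hzy : ∀ j, z j = -(y j) := by
    intro j
    by_cases hj : j ∈ lam
    · simp [hz, hj]
    · simp [hz, hj, hyoff j hj]
  have hz0 : ∀ i, 0 ≤ z i := by
    intro i
    rw [hzy]
    by_cases hi : i ∈ lam
    · linarith [hyneg i hi]
    · simp [hyoff i hi]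
  have hzsupp : ∀ i, i ∉ lam.toFinset → z i = 0 := by
    intro i hi
    simp only [hz]
    rw [if_neg (fun h => hi (Set.mem_toFinset.mpr h))]
  have hAz : ∀ i ∈ lam.toFinset, ∑ j, A i j * z j ≤ 0 := by
    intro i hi
    have hilam : i ∈ lam := Set.mem_toFinset.mp hi
    have hδ : (fun k => if k = i then (1 : ℝ) else 0) ∈ Scone := by
      refine ⟨fun k => ?_, fun k hk => ?_⟩
      · by_cases h : k = i <;> simp [h]
      · have hki : k ≠ i := by rintro rfl; exact hk hilam
        simp [hki]
    have h0 := hfb _ hδ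
    have hFδ : F (fun k => if k = i then (1 : ℝ) else 0) = fun j => A i j := by
      funext j
      simp [hF, Finset.sum_ite_eq']
    rw [hFδ, hdecomp] at h0
    have : ∑ j, A i j * z j = -∑ j, A i j * y j := by
      rw [← Finset.sum_neg_distrib]
      exact Finset.sum_congr rfl fun j _ => by rw [hzy]; ring
    rw [this]
    linarith
  have hz_eq := keyQ_aux A hS lam.toFinset.card lam.toFinset le_rfl z hz0 hzsupp hAz
  have hy_eq : ∀ j, y j = 0 := by
    intro j
    have := hzy j
    rw [hz_eq] at this
    simpa using this.symm
  have : f ones = 0 := by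
    rw [hdecomp]
    exact Finset.sum_eq_zero fun i _ => by rw [hy_eq]; ring
  linarith

theorem stmt1
    {n N : ℕ} (hn : 1 ≤ n) (hNn : n ≤ N)
    (nv dv : Fin N → Evec n)
    (hnv : ∀ i, ‖nv i‖ = 1) (hdv : ∀ i, ‖dv i‖ = 1)
    (hdn : ∀ i, 0 < ⟪dv i, nv i⟫)
    (hvertex : ProperVertex nv)
    (hc21 : Cond21 nv dv)
    :
    ∀ lam : Set (Fin N), lam.Nonempty →
      ∃ nl : Evec n, ‖nl‖ = 1 ∧
        (∀ x ∈ Gset nv, inIdx nv x = lam → nl ∈ nSet nv x) ∧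
        ∀ i ∈ lam, 0 < ⟪nl, dv i⟫ := by
  intro lam hlam
  classical
  have hS : ∀ lam' : Set (Fin N), lam'.Nonempty →
      ∃ c : Fin N → ℝ, (∀ i, 0 ≤ c i) ∧ (∀ i, i ∉ lam' → c i = 0) ∧
        ∀ i ∈ lam', 0 < ∑ j, c j * ⟪nv i, dv j⟫ := by
    intro lam' hne
    obtain ⟨dl, hdl, hpos⟩ := hc21 lam' hne
    obtain ⟨c, hc0, hcs, hdleq⟩ := hdl
    refine ⟨c, hc0, hcs, fun i hi => ?_⟩
    have h := hpos i hi
    rw [hdleq, sum_inner] at h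
    have heq : ∑ j, ⟪c j • dv j, nv i⟫ = ∑ j, c j * ⟪nv i, dv j⟫ :=
      Finset.sum_congr rfl fun j _ => by
        rw [real_inner_smul_left, real_inner_comm]
    rwa [heq] at h
  obtain ⟨cc, hcc0, hccs, hccpos⟩ := ville_aux (fun i j => ⟪nv i, dv j⟫) lam hS
  set nl0 : Evec n := ∑ i, cc i • nv i with hnl0
  have hpos0 : ∀ j ∈ lam, 0 < ⟪nl0, dv j⟫ := by
    intro j hj
    have h := hccpos j hj
    have heq : ⟪nl0, dv j⟫ = ∑ i, cc i * ⟪nv i, dv j⟫ := by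
      rw [hnl0, sum_inner]
      exact Finset.sum_congr rfl fun i _ => real_inner_smul_left _ _ _
    rw [heq]
    exact h
  obtain ⟨j₀, hj₀⟩ := hlam
  have hnl0ne : nl0 ≠ 0 := by
    intro h
    have h2 := hpos0 j₀ hj₀
    rw [h, inner_zero_left] at h2
    exact lt_irrefl 0 h2
  have hnorm : 0 < ‖nl0‖ := norm_pos_iff.mpr hnl0ne
  refine ⟨‖nl0‖⁻¹ • nl0, norm_smul_inv_norm hnl0ne, ?_, ?_⟩
  · intro x hxG hxIn
    refine ⟨norm_smul_inv_norm hnl0ne, fun yv hyv => ?_⟩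
    have hx0 : ⟪nl0, x⟫ = 0 := by
      rw [hnl0, sum_inner]
      refine Finset.sum_eq_zero fun i _ => ?_
      rw [real_inner_smul_left]
      by_cases hi : i ∈ lam
      · have hxi : ⟪x, nv i⟫ = 0 := by rw [← hxIn] at hi; exact hi
        rw [real_inner_comm, hxi, mul_zero]
      · rw [hccs i hi, zero_mul]
    have hy0 : 0 ≤ ⟪nl0, yv⟫ := by
      rw [hnl0, sum_inner]
      refine Finset.sum_nonneg fun i _ => ?_
      rw [real_inner_smul_left, real_inner_comm]
      exact mul_nonneg (hcc0 i) (hyv i)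
    rw [real_inner_smul_left, inner_sub_right, hx0]
    have hinv : (0:ℝ) ≤ ‖nl0‖⁻¹ := inv_nonneg.mpr hnorm.le
    nlinarith
  · intro i hi
    rw [real_inner_smul_left]
    exact mul_pos (inv_pos.mpr hnorm) (hpos0 i hi)


end
end

section
/- Let R̃ ⊆ ℝ^n be nonempty and let f be a Lyapunov function for the SP (G,d) with respect to R̃, with constant c > 0 as in property (c). Then there exist M₀ ∈ (0,∞) and δ₀ ∈ (0,1) such that Df(x)·d ≤ −c/2 whenever x ∈ G with |x| ≥ M₀, y ∈ ∂G with |y − x| ≤ δ₀, and d ∈ d(y). -/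
open MeasureTheory Set Metric Filter Topology RealInnerProductSpace
open scoped Classical ENNReal

noncomputable section

variable {n N : ℕ}

theorem stmt3
    {n N : ℕ} (hn : 1 ≤ n) (hNn : n ≤ N)
    (nv dv : Fin N → Evec n)
    (hnv : ∀ i, ‖nv i‖ = 1) (hdv : ∀ i, ‖dv i‖ = 1)
    (hdn : ∀ i, 0 < ⟪dv i, nv i⟫)
    (hvertex : ProperVertex nv)
    (Rt : Set (Evec n)) (hRt : Rt.Nonempty)
    (f : Evec n → ℝ) (f' : Evec n → Evec n →L[ℝ] ℝ)
    (f'' : Evec n → Evec n →L[ℝ] Evec n →L[ℝ] ℝ)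
    (hf1 : ∀ x ∈ Gset nv \ {0}, HasFDerivWithinAt f (f' x) (Gset nv \ {0}) x)
    (hf2 : ∀ x ∈ Gset nv \ {0}, HasFDerivWithinAt f' (f'' x) (Gset nv \ {0}) x)
    (hf1c : ContinuousOn f' (Gset nv \ {0})) (hf2c : ContinuousOn f'' (Gset nv \ {0}))
    (hfa : ∀ N' : ℝ, 0 < N' → ∃ M : ℝ, 0 < M ∧ ∀ x ∈ Gset nv, M ≤ ‖x‖ → N' ≤ f x)
    (hfb : ∀ ε : ℝ, 0 < ε → ∃ M : ℝ, 0 < M ∧ ∀ x ∈ Gset nv, M ≤ ‖x‖ → ‖f'' x‖ ≤ ε)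
    (c : ℝ) (hc : 0 < c)
    (hc1 : ∀ r0 ∈ Rt, ∀ x ∈ Gset nv, x ≠ 0 → f' x r0 ≤ -c)
    (hc2 : ∀ x ∈ frontier (Gset nv), x ≠ 0 → ∀ d ∈ dDir nv dv x, f' x d ≤ -c)
    (L : ℝ) (hL : 0 < L) (hLd : ∀ x ∈ Gset nv, ‖f' x‖ ≤ L)
    :
    ∃ M₀ δ₀ : ℝ, 0 < M₀ ∧ δ₀ ∈ Ioo (0:ℝ) 1 ∧
      ∀ x ∈ Gset nv, M₀ ≤ ‖x‖ → ∀ y ∈ frontier (Gset nv), ‖y - x‖ ≤ δ₀ →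
        ∀ d ∈ dDir nv dv y, f' x d ≤ -(c / 2) := by
  obtain ⟨M, hM, hMb⟩ := hfb (c / 2) (by linarith)
  refine ⟨M + 1, 1 / 2, by linarith, ⟨by norm_num, by norm_num⟩, ?_⟩
  intro x hx hxM y hy hyx d hd
  have hGconv : Convex ℝ (Gset nv) := by
    intro u hu v hv a b ha hb hab i
    have hu' := hu i
    have hv' := hv i
    simp only [Gset, Set.mem_setOf_eq] at *
    rw [inner_add_left, real_inner_smul_left, real_inner_smul_left]
    positivity
  have hGclosed : IsClosed (Gset nv) := by
    have heq : Gset nv = ⋂ i, {x : Evec n | 0 ≤ ⟪x, nv i⟫} := by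
      ext z; simp [Gset, Set.mem_iInter]
    rw [heq]
    exact isClosed_iInter fun i =>
      isClosed_le continuous_const (Continuous.inner continuous_id continuous_const)
  have hyG : y ∈ Gset nv := by
    have h := frontier_subset_closure hy
    rwa [hGclosed.closure_eq] at h
  have hznorm : ∀ z ∈ segment ℝ x y, M ≤ ‖z‖ ∧ z ≠ 0 := by
    intro z hz
    obtain ⟨a, b, ha, hb, hab, rfl⟩ := hz
    have h1 : a • x + b • y - x = b • (y - x) := by
      have hA : a = 1 - b := by linarith
      rw [hA]; module
    have h2 : ‖a • x + b • y - x‖ ≤ 1 / 2 := by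
      rw [h1, norm_smul, Real.norm_eq_abs, abs_of_nonneg hb]
      calc b * ‖y - x‖ ≤ 1 * (1 / 2) :=
            mul_le_mul (by linarith) hyx (norm_nonneg _) (by norm_num)
        _ = 1 / 2 := by norm_num
    have h3 : ‖x‖ - ‖a • x + b • y‖ ≤ ‖a • x + b • y - x‖ := by
      have h := abs_norm_sub_norm_le (a • x + b • y) x
      rw [abs_le] at h
      linarith [h.1]
    constructor
    · linarith
    · intro h0
      rw [h0, zero_sub, norm_neg] at h2
      linarith
  have hseg : segment ℝ x y ⊆ Gset nv \ {0} := by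
    intro z hz
    exact ⟨hGconv.segment_subset hx hyG hz, (hznorm z hz).2⟩
  have hxs : x ∈ segment ℝ x y := left_mem_segment ℝ x y
  have hys : y ∈ segment ℝ x y := right_mem_segment ℝ x y
  have hbound : ∀ z ∈ segment ℝ x y, ‖f'' z‖ ≤ c / 2 := fun z hz =>
    hMb z (hseg hz).1 (hznorm z hz).1
  have hderiv : ∀ z ∈ segment ℝ x y, HasFDerivWithinAt f' (f'' z) (segment ℝ x y) z :=
    fun z hz => (hf2 z (hseg hz)).mono hseg
  have hmvt : ‖f' y - f' x‖ ≤ c / 2 * ‖y - x‖ :=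
    (convex_segment x y).norm_image_sub_le_of_norm_hasFDerivWithin_le hderiv hbound hxs hys
  have hy0 : y ≠ 0 := (hznorm y hys).2
  have hfy : f' y d ≤ -c := hc2 y hy hy0 d hd
  have hd1 : ‖d‖ = 1 := mem_sphere_zero_iff_norm.mp hd.2
  have hdiff : f' x d - f' y d ≤ ‖f' x - f' y‖ := by
    have h1 : (f' x - f' y) d ≤ ‖(f' x - f' y) d‖ := le_abs_self _
    have h2 : ‖(f' x - f' y) d‖ ≤ ‖f' x - f' y‖ * ‖d‖ :=
      ContinuousLinearMap.le_opNorm _ _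
    rw [hd1, mul_one] at h2
    have he : (f' x - f' y) d = f' x d - f' y d := ContinuousLinearMap.sub_apply _ _ _
    linarith
  have hns : ‖f' x - f' y‖ = ‖f' y - f' x‖ := norm_sub_rev _ _
  have hquart : ‖f' y - f' x‖ ≤ c / 4 := by
    calc ‖f' y - f' x‖ ≤ c / 2 * ‖y - x‖ := hmvt
      _ ≤ c / 2 * (1 / 2) := by
          apply mul_le_mul_of_nonneg_left hyx (by linarith)
      _ = c / 4 := by ring
  linarith [hdiff, hquart, hns.le]

end
end

section
/- Let (x_k, a_k, φ_k)_{k≥1} ⊂ ℝ^n × (0,1] × C([0,∞); ℝ^n) be such that x_k → x, a_k → 0, and φ_k → φ uniformly on compact subsets of [0,∞). Suppose each φ_k is absolutely continuous with φ_k(0) = x_k and φ_k'(t) ∈ K^{a_k}(φ_k(t)) for a.e. t ∈ [0,∞). Then φ is Lipschitz continuous and satisfies φ(0) = x and φ'(t) ∈ K̄(φ(t)) for a.e. t ∈ [0,∞). -/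
/-!
The velocities of all approximating solutions lie in one ball, since every `K^a(x)` does (the
mollified field is bounded by `∫ |ρ|` times a bound for `v`). Hence the `φ_k` are uniformly
Lipschitz, so is their limit `φ`, and `φ` is the integral of its a.e. derivative.

At a point `t` of differentiability, the difference quotient of `φ_k` over `(t, s]` is an average
of `φ_k'`, whose values lie in sets `K^{a_k}(y)` with `a_k` small and `y` close to `φ(t)`. By
compactness these sets lie in the `ε`-neighbourhood of `K(φ(t))`, so the quotient lies in the
closed convex `ε`-neighbourhood of `conv K(φ(t))`. Letting `k → ∞`, then `s ↓ t`, then `ε → 0`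
puts `φ'(t)` in `K̄(φ(t))`.
-/

open MeasureTheory Set Metric Filter Topology RealInnerProductSpace
open scoped Classical ENNReal

noncomputable section

variable {n N : ℕ}

theorem LipschitzOnWith.of_tendsto {α β ι : Type*} [PseudoMetricSpace α] [PseudoMetricSpace β]
    {l : Filter ι} [l.NeBot] {f : ι → α → β} {g : α → β} {K : NNReal} {s : Set α}
    (hf : ∀ i, LipschitzOnWith K (f i) s)
    (hlim : ∀ x ∈ s, Tendsto (fun i => f i x) l (𝓝 (g x))) : LipschitzOnWith K g s :=
  LipschitzOnWith.of_dist_le_mul fun x hx y hy =>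
    le_of_tendsto ((hlim x hx).dist (hlim y hy))
      (Eventually.of_forall fun i => (hf i).dist_le_mul x hx y hy)

theorem LipschitzOnWith.exists_lipschitzWith_eqOn_Ici {α : Type*} [PseudoEMetricSpace α]
    {f : ℝ → α} {K : NNReal} {a : ℝ} (hf : LipschitzOnWith K f (Ici a)) :
    ∃ g : ℝ → α, LipschitzWith K g ∧ EqOn g f (Ici a) := by
  refine ⟨f ∘ fun t => max t a, ?_, fun t ht => congrArg f (max_eq_left ht)⟩
  rw [← lipschitzOnWith_univ]
  simpa using hf.comp ((LipschitzWith.id.max_const a).lipschitzOnWith (s := univ))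
    fun t _ => le_max_right t a

section

variable {E : Type*} [NormedAddCommGroup E] [NormedSpace ℝ E]

theorem LipschitzWith.intervalIntegrable_deriv [CompleteSpace E] {f : ℝ → E} {L : NNReal}
    (hf : LipschitzWith L f) (a b : ℝ) : IntervalIntegrable (deriv f) volume a b :=
  intervalIntegrable_const (c := (L : ℝ)) |>.mono_fun'
    (stronglyMeasurable_deriv f).aestronglyMeasurable
    (Eventually.of_forall fun _ => norm_deriv_le_of_lipschitz hf)

theorem LipschitzWith.integral_deriv_eq_sub {ι : Type*} [Fintype ι]
    {f : ℝ → EuclideanSpace ℝ ι} {L : NNReal} (hf : LipschitzWith L f) (a b : ℝ) :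
    ∫ x in a..b, deriv f x = f b - f a := by
  ext i
  set π := EuclideanSpace.proj (𝕜 := ℝ) (ι := ι) i
  have hderiv : ∀ᵐ x, x ∈ uIoc a b → π (deriv f x) = deriv (π ∘ f) x := by
    filter_upwards [hf.ae_differentiableAt] with x hx _
    exact ((π.hasFDerivAt.comp_hasDerivAt x hx.hasDerivAt).deriv).symm
  calc (∫ x in a..b, deriv f x) i = ∫ x in a..b, π (deriv f x) :=
        (π.intervalIntegral_comp_comm (hf.intervalIntegrable_deriv a b)).symm
    _ = ∫ x in a..b, deriv (π ∘ f) x := intervalIntegral.integral_congr_ae hderiv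
    _ = π (f b) - π (f a) :=
        (π.lipschitz.comp hf).lipschitzOnWith.absolutelyContinuousOnInterval.integral_deriv_eq_sub
    _ = (f b - f a) i := rfl

theorem sub_eq_setIntegral_Ioc_of_eq_add_integral {φ φ' : ℝ → E}
    (hint : ∀ t, 0 ≤ t → IntegrableOn φ' (Icc 0 t))
    (hrep : ∀ t, 0 ≤ t → φ t = φ 0 + ∫ u in Icc 0 t, φ' u) {s t : ℝ} (hs : 0 ≤ s)
    (hst : s ≤ t) : φ t - φ s = ∫ u in Ioc s t, φ' u := by
  have hii : ∀ r, 0 ≤ r → IntervalIntegrable φ' volume 0 r := fun r hr =>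
    (intervalIntegrable_iff_integrableOn_Icc_of_le hr).2 (hint r hr)
  rw [hrep t (hs.trans hst), hrep s hs, integral_Icc_eq_integral_Ioc,
    integral_Icc_eq_integral_Ioc, ← intervalIntegral.integral_of_le (hs.trans hst),
    ← intervalIntegral.integral_of_le hs, ← intervalIntegral.integral_of_le hst,
    ← intervalIntegral.integral_interval_sub_left (hii t (hs.trans hst)) (hii s hs)]
  abel

theorem slope_mem_of_ae_mem [CompleteSpace E] {T : Set E} (hT : Convex ℝ T) (hTc : IsClosed T)
    {φ φ' : ℝ → E} {s t : ℝ} (hst : s < t) (hint : IntegrableOn φ' (Ioc s t))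
    (hrep : φ t - φ s = ∫ u in Ioc s t, φ' u)
    (hmem : ∀ᵐ u ∂volume.restrict (Ioc s t), φ' u ∈ T) : slope φ s t ∈ T := by
  have havg : slope φ s t = ⨍ u in Ioc s t, φ' u := by
    rw [slope_def_module, setAverage_eq, Real.volume_real_Ioc_of_le hst.le, hrep]
  rw [havg]
  exact hT.set_average_mem hTc (by simp [hst]) (by simp) hmem hint

theorem slope_mem_of_tendsto [CompleteSpace E] {T : Set E} (hT : Convex ℝ T) (hTc : IsClosed T)
    {φs D : ℕ → ℝ → E} {φ : ℝ → E} {s t : ℝ} (hst : s < t)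
    (hint : ∀ k, IntegrableOn (D k) (Ioc s t))
    (hrep : ∀ k, φs k t - φs k s = ∫ u in Ioc s t, D k u)
    (hlim_s : Tendsto (fun k => φs k s) atTop (𝓝 (φ s)))
    (hlim_t : Tendsto (fun k => φs k t) atTop (𝓝 (φ t)))
    (hmem : ∀ᶠ k in atTop, ∀ᵐ u ∂volume.restrict (Ioc s t), D k u ∈ T) :
    slope φ s t ∈ T := by
  refine hTc.mem_of_tendsto (f := fun k => slope (φs k) s t) ?_
    (hmem.mono fun k hk => slope_mem_of_ae_mem hT hTc hst (hint k) (hrep k) hk)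
  simp only [slope_def_module]
  exact (hlim_t.sub hlim_s).const_smul _

theorem HasDerivWithinAt.mem_of_eventually_slope_mem {φ : ℝ → E} {φ' : E} {t : ℝ} {T : Set E}
    (hφ : HasDerivWithinAt φ φ' (Ioi t) t) (hTc : IsClosed T)
    (hslope : ∀ᶠ s in 𝓝[>] t, slope φ t s ∈ T) : φ' ∈ T :=
  hTc.mem_of_tendsto ((hasDerivWithinAt_iff_tendsto_slope' self_notMem_Ioi).1 hφ) hslope

end

theorem norm_inv_pow_smul_integral_le {E F : Type*} [NormedAddCommGroup E] [NormedSpace ℝ E]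
    [FiniteDimensional ℝ E] [MeasurableSpace E] [BorelSpace E] {μ : Measure E}
    [μ.IsAddHaarMeasure] [NormedAddCommGroup F] [NormedSpace ℝ F] {ρ : E → ℝ}
    (hρ : Integrable ρ μ) {c : ℝ} (hc : 0 < c) (x : E) {f : E → F} {M : ℝ}
    (hf : ∀ y, ‖f y‖ ≤ M) :
    ‖(c ^ Module.finrank ℝ E)⁻¹ • ∫ y, ρ (c⁻¹ • (x - y)) • f y ∂μ‖ ≤ (∫ y, |ρ y| ∂μ) * M := by
  have hcd : 0 < c ^ Module.finrank ℝ E := pow_pos hc _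
  have hdom : Integrable (fun y => |ρ (c⁻¹ • (x - y))| * M) μ :=
    ((hρ.comp_smul (inv_ne_zero hc.ne')).comp_sub_left x).abs.mul_const M
  have hscale : ∫ y, |ρ (c⁻¹ • (x - y))| ∂μ = c ^ Module.finrank ℝ E * ∫ y, |ρ y| ∂μ := by
    rw [integral_sub_left_eq_self (fun z => |ρ (c⁻¹ • z)|) μ x,
      Measure.integral_comp_inv_smul_of_nonneg μ (fun y => |ρ y|) hc.le, smul_eq_mul]
  calc ‖(c ^ Module.finrank ℝ E)⁻¹ • ∫ y, ρ (c⁻¹ • (x - y)) • f y ∂μ‖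
      ≤ (c ^ Module.finrank ℝ E)⁻¹ * ∫ y, |ρ (c⁻¹ • (x - y))| * M ∂μ := by
        rw [norm_smul, Real.norm_of_nonneg (inv_nonneg.2 hcd.le)]
        gcongr
        refine norm_integral_le_of_norm_le hdom (Eventually.of_forall fun y => ?_)
        rw [norm_smul, Real.norm_eq_abs]
        exact mul_le_mul_of_nonneg_left (hf y) (abs_nonneg _)
    _ = (∫ y, |ρ y| ∂μ) * M := by
        rw [integral_mul_const, hscale]
        field_simp

theorem exists_Ka_subset_closedBall (nv dv : Fin N → Evec n) (dlam : Set (Fin N) → Evec n)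
    {ρ : Evec n → ℝ} (hρ : Integrable ρ) {g : ℝ → ℝ} (hg : ∀ t, g t ∈ Icc (0 : ℝ) 1)
    {C1 : Set (Evec n)} (hC1 : Bornology.IsBounded C1) :
    ∃ R : NNReal, ∀ a, 0 < a → ∀ x, Ka nv dv dlam ρ g C1 a x ⊆ closedBall 0 R := by
  obtain ⟨B1, hB1, hC1B⟩ := hC1.subset_closedBall_lt 0 0
  obtain ⟨B2, hB2, hdlamB⟩ := (finite_range dlam).isBounded.subset_closedBall_lt 0 0
  obtain ⟨B3, hB3, hdvB⟩ := (finite_range dv).isBounded.subset_closedBall_lt 0 0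
  set R := max (max B1 B3) ((∫ y, |ρ y|) * max B1 B2)
  have hR : 0 ≤ R := le_max_of_le_left (le_max_of_le_left hB1.le)
  refine ⟨R.toNNReal, fun a ha x => ?_⟩
  rw [Real.coe_toNNReal R hR]
  refine iUnion₂_subset fun β hβ => convexHull_min ?_ (convex_closedBall 0 R)
  have hβR : β ∈ closedBall 0 R :=
    closedBall_subset_closedBall (le_max_of_le_left (le_max_left _ _)) (hC1B hβ)
  have hdvR : ∀ j, dv j ∈ closedBall 0 R := fun j =>
    closedBall_subset_closedBall (le_max_of_le_left (le_max_right _ _))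
      (hdvB (mem_range_self j))
  rintro - ⟨i, rfl⟩
  by_cases hx : x = 0
  · simp [vA, hx, hR]
  have hvMoll : vMoll nv dlam ρ a β x ∈ closedBall 0 R := by
    have hvRaw : ∀ y, ‖vRaw nv dlam β y‖ ≤ max B1 B2 := by
      intro y
      unfold vRaw
      split_ifs
      · simpa using le_max_of_le_left (c := B2) (mem_closedBall_zero_iff.1 (hC1B hβ))
      · simpa using le_max_of_le_right (b := B1)
          (mem_closedBall_zero_iff.1 (hdlamB (mem_range_self _)))
    have := norm_inv_pow_smul_integral_le hρ (mul_pos ha (norm_pos_iff.2 hx)) x hvRaw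
    rw [finrank_euclideanSpace_fin] at this
    exact mem_closedBall_zero_iff.2 (this.trans (le_max_right _ _))
  have hmix : ∀ s w, s ∈ Icc (0 : ℝ) 1 → w ∈ closedBall 0 R →
      s • w + (1 - s) • vMoll nv dlam ρ a β x ∈ closedBall 0 R := fun s w hs hw =>
    convex_closedBall 0 R hw hvMoll hs.1 (sub_nonneg.2 hs.2) (by ring)
  simp only [vA, if_neg hx]
  refine Fin.cases ?_ (fun j => ?_) i
  · exact hmix _ _ (hg _) hβR
  · exact hmix _ _ (hg _) (hdvR j)

theorem DIsol.lipschitzOnWith {K : Evec n → Set (Evec n)} {φ : ℝ → Evec n} {R : NNReal}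
    (hK : ∀ y, K y ⊆ closedBall 0 R) (hφ : DIsol K φ) : LipschitzOnWith R φ (Ici 0) := by
  obtain ⟨φ', hint, hrep, hmem⟩ := hφ
  have hbound : ∀ s t, 0 ≤ s → s ≤ t → dist (φ t) (φ s) ≤ R * (t - s) := by
    intro s t hs hst
    have hb : ∀ᵐ u ∂volume.restrict (Ioc s t), ‖φ' u‖ ≤ R := by
      refine ae_restrict_of_ae_restrict_of_subset (fun u hu => hs.trans hu.1.le) ?_
      filter_upwards [hmem] with u hu
      simpa using hK _ hu
    rw [dist_eq_norm, sub_eq_setIntegral_Ioc_of_eq_add_integral hint hrep hs hst]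
    simpa [Real.volume_real_Ioc_of_le hst, mul_comm] using
      norm_setIntegral_le_of_norm_le_const_ae (by simp) hb
  refine LipschitzOnWith.of_dist_le_mul fun s hs t ht => ?_
  rcases le_total s t with hst | hts
  · rw [dist_comm, Real.dist_eq, abs_of_nonpos (by linarith)]
    simpa using hbound s t hs hst
  · rw [Real.dist_eq, abs_of_nonneg (by linarith)]
    exact hbound t s ht hts

theorem eventually_Ka_subset_cthickening_Kzero (nv dv : Fin N → Evec n)
    (dlam : Set (Fin N) → Evec n) (ρ : Evec n → ℝ) (g : ℝ → ℝ) (C1 : Set (Evec n))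
    {R : NNReal} (hR : ∀ a, 0 < a → ∀ x, Ka nv dv dlam ρ g C1 a x ⊆ closedBall 0 R)
    (z : Evec n) {ε : ℝ} (hε : 0 < ε) :
    ∀ᶠ p in 𝓝[>] (0 : ℝ) ×ˢ 𝓝 z,
      Ka nv dv dlam ρ g C1 p.1 p.2 ⊆ cthickening ε (Kzero nv dv dlam ρ g C1 z) := by
  set K0 := Kzero nv dv dlam ρ g C1 z
  by_contra hnot
  have hfreq : ∃ᶠ p in 𝓝[>] (0 : ℝ) ×ˢ 𝓝 z,
      p.1 ∈ Ioc 0 1 ∧ ∃ v ∈ Ka nv dv dlam ρ g C1 p.1 p.2, v ∉ cthickening ε K0 :=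
    ((not_eventually.1 hnot).and_eventually (Eventually.prod_inl (Ioc_mem_nhdsGT one_pos) _)).mono
      fun p ⟨hp, hp1⟩ => ⟨hp1, not_subset.1 hp⟩
  obtain ⟨p, hp, hpmem⟩ := frequently_iff_seq_forall.1 hfreq
  choose v hvK hvout using fun k => (hpmem k).2
  obtain ⟨w, -, m, hm, hvw⟩ := (isCompact_closedBall (0 : Evec n) R).tendsto_subseq
    fun k => hR _ (hpmem k).1.1 _ (hvK k)
  have hpm := hp.comp hm.tendsto_atTop
  have hw : w ∈ K0 := ⟨fun k => (p (m k)).1, fun k => (p (m k)).2, v ∘ m,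
    fun k => (hpmem _).1, fun k => hvK _, (tendsto_nhdsWithin_iff.1 hpm.fst).1, hpm.snd, hvw⟩
  obtain ⟨k, hk⟩ := (hvw.eventually (isOpen_thickening.mem_nhds
    (self_subset_thickening hε K0 hw))).exists
  exact hvout (m k) (thickening_subset_cthickening ε K0 hk)

theorem mem_Kbar_of_hasDerivWithinAt (nv dv : Fin N → Evec n)
    (dlam : Set (Fin N) → Evec n) (ρ : Evec n → ℝ) (g : ℝ → ℝ) (C1 : Set (Evec n))
    {R : NNReal} (hR : ∀ a, 0 < a → ∀ x, Ka nv dv dlam ρ g C1 a x ⊆ closedBall 0 R)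
    {as : ℕ → ℝ} (has : ∀ k, 0 < as k) (has0 : Tendsto as atTop (𝓝 0))
    {φs : ℕ → ℝ → Evec n} (hsol : ∀ k, DIsol (Ka nv dv dlam ρ g C1 (as k)) (φs k))
    {φ : ℝ → Evec n} (hlim : ∀ t, 0 ≤ t → Tendsto (fun k => φs k t) atTop (𝓝 (φ t)))
    {t : ℝ} (ht : 0 ≤ t) {φ' : Evec n} (hφ' : HasDerivWithinAt φ φ' (Ioi t) t) :
    φ' ∈ Kbar nv dv dlam ρ g C1 (φ t) := by
  have hlip : ∀ k, LipschitzOnWith R (φs k) (Ici 0) := fun k =>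
    (hsol k).lipschitzOnWith (hR _ (has k))
  choose D hint hrep hmem using hsol
  set K0 := Kzero nv dv dlam ρ g C1 (φ t)
  rw [Kbar, closure_eq_iInter_cthickening, mem_iInter₂]
  intro ε hε
  obtain ⟨U, hU, V, hV, hUV⟩ :=
    mem_prod_iff.1 (eventually_Ka_subset_cthickening_Kzero nv dv dlam ρ g C1 hR (φ t) hε)
  obtain ⟨δ, hδ, hδV⟩ := Metric.mem_nhds_iff.1 hV
  have hasU : ∀ᶠ k in atTop, as k ∈ U :=
    tendsto_nhdsWithin_iff.2 ⟨has0, Eventually.of_forall has⟩ hU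
  have hclose : ∀ᶠ k in atTop, dist (φs k t) (φ t) < δ / 2 :=
    Metric.tendsto_nhds.1 (hlim t ht) _ (half_pos hδ)
  have hnear : ∀ᶠ s in 𝓝[>] t, (R : ℝ) * (s - t) < δ / 2 := by
    have h0 : Tendsto (fun s => (R : ℝ) * (s - t)) (𝓝 t) (𝓝 0) := by
      simpa using ((tendsto_id (x := 𝓝 t)).sub_const t).const_mul (R : ℝ)
    exact nhdsWithin_le_nhds (h0.eventually_lt_const (half_pos hδ))
  refine hφ'.mem_of_eventually_slope_mem isClosed_cthickening ?_
  filter_upwards [hnear, self_mem_nhdsWithin] with s hsδ (hts : t < s)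
  have hs0 : 0 ≤ s := ht.trans hts.le
  have hIoc : Ioc t s ⊆ Ici 0 := fun u hu => ht.trans hu.1.le
  refine slope_mem_of_tendsto ((convex_convexHull ℝ K0).cthickening ε) isClosed_cthickening
    hts (fun k => (hint k s hs0).mono_set fun u hu => ⟨hIoc hu, hu.2⟩)
    (fun k => sub_eq_setIntegral_Ioc_of_eq_add_integral (hint k) (hrep k) ht hts.le)
    (hlim t ht) (hlim s hs0) ?_
  filter_upwards [hasU, hclose] with k hkU hkt
  filter_upwards [ae_restrict_of_ae_restrict_of_subset hIoc (hmem k),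
    ae_restrict_mem measurableSet_Ioc] with u hu hut
  have hdist : dist (φs k u) (φ t) < δ := by
    have hut_le : dist (φs k u) (φs k t) ≤ R * (s - t) := by
      refine ((hlip k).dist_le_mul u (hIoc hut) t ht).trans ?_
      rw [Real.dist_eq, abs_of_pos (sub_pos.2 hut.1)]
      gcongr
      exact hut.2
    linarith [dist_triangle (φs k u) (φs k t) (φ t)]
  exact cthickening_subset_of_subset ε (subset_convexHull ℝ K0)
    (hUV (mk_mem_prod hkU (hδV hdist)) hu)

theorem stmt14_general
    {n N : ℕ}
    (nv dv : Fin N → Evec n)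
    (dlam : Set (Fin N) → Evec n)
    (C1 : Set (Evec n)) (hC1c : IsCompact C1)
    (ρ : Evec n → ℝ) (hρ : ContDiff ℝ (⊤ : ℕ∞) ρ)
    (hρs : Function.support ρ ⊆ closedBall (0 : Evec n) 1)
    (g : ℝ → ℝ) (hgm : ∀ t, g t ∈ Icc (0:ℝ) 1)
    (xs : ℕ → Evec n) (as : ℕ → ℝ) (φs : ℕ → ℝ → Evec n) (x : Evec n) (φ : ℝ → Evec n)
    (has : ∀ k, as k ∈ Ioc (0:ℝ) 1)
    (hxs : Tendsto xs atTop (𝓝 x)) (has0 : Tendsto as atTop (𝓝 0))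
    (hunif : ∀ K : Set ℝ, K ⊆ Ici 0 → IsCompact K →
      TendstoUniformlyOn (fun k => φs k) φ atTop K)
    (hsol : ∀ k, φs k 0 = xs k ∧ DIsol (Ka nv dv dlam ρ g C1 (as k)) (φs k))
    :
    (∃ L : NNReal, LipschitzOnWith L φ (Ici 0)) ∧ φ 0 = x ∧
      DIsol (Kbar nv dv dlam ρ g C1) φ := by
  have hρint : Integrable ρ := hρ.continuous.integrable_of_hasCompactSupport
    (HasCompactSupport.intro (isCompact_closedBall 0 1) (Function.support_subset_iff'.1 hρs))
  obtain ⟨R, hR⟩ := exists_Ka_subset_closedBall nv dv dlam hρint hgm hC1c.isBounded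
  have hlim : ∀ t, 0 ≤ t → Tendsto (fun k => φs k t) atTop (𝓝 (φ t)) := fun t ht =>
    (hunif {t} (singleton_subset_iff.2 ht) isCompact_singleton).tendsto_at rfl
  have hφlip : LipschitzOnWith R φ (Ici 0) :=
    .of_tendsto (fun k => (hsol k).2.lipschitzOnWith (hR _ (has k).1)) hlim
  obtain ⟨ψ, hψ, hψφ⟩ := hφlip.exists_lipschitzWith_eqOn_Ici
  refine ⟨⟨R, hφlip⟩, ?_, deriv ψ, fun t ht => ?_, fun t ht => ?_, ?_⟩
  · exact tendsto_nhds_unique (hlim 0 le_rfl) (by simpa [(hsol _).1] using hxs)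
  · exact (intervalIntegrable_iff_integrableOn_Icc_of_le ht).1 (hψ.intervalIntegrable_deriv 0 t)
  · rw [integral_Icc_eq_integral_Ioc, ← intervalIntegral.integral_of_le ht,
      hψ.integral_deriv_eq_sub, hψφ ht, hψφ self_mem_Ici, add_sub_cancel]
  · filter_upwards [ae_restrict_of_ae hψ.ae_differentiableAt, ae_restrict_mem measurableSet_Ici]
      with t hdiff ht
    refine mem_Kbar_of_hasDerivWithinAt nv dv dlam ρ g C1 hR (fun k => (has k).1) has0
      (fun k => (hsol k).2) hlim ht (hdiff.hasDerivAt.hasDerivWithinAt.congr ?_ (hψφ ht).symm)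
    exact fun s hs => (hψφ (ht.trans hs.out.le)).symm

theorem stmt14
    {n N : ℕ} (hn : 1 ≤ n) (hNn : n ≤ N)
    (nv dv : Fin N → Evec n)
    (hnv : ∀ i, ‖nv i‖ = 1) (hdv : ∀ i, ‖dv i‖ = 1)
    (hdn : ∀ i, 0 < ⟪dv i, nv i⟫)
    (hvertex : ProperVertex nv)
    (dlam : Set (Fin N) → Evec n) (hdlam : Cond21At nv dv dlam)
    (C1 : Set (Evec n)) (hC1c : IsCompact C1) (hC1 : C1 ⊆ interior (Cset dv))
    (δ : ℝ) (hδ : 0 < δ) (hδd : ∀ x ∈ C1, δ ≤ infDist x (frontier (Cset dv)))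
    (ρ : Evec n → ℝ) (hρ : ContDiff ℝ (⊤ : ℕ∞) ρ)
    (hρs : Function.support ρ ⊆ closedBall (0 : Evec n) 1)
    (hρi : ∫ x : Evec n, ρ x = 1)
    (g : ℝ → ℝ) (hg : ContDiff ℝ (⊤ : ℕ∞) g) (hgm : ∀ t, g t ∈ Icc (0:ℝ) 1)
    (hg1 : ∀ t ∈ Icc (0:ℝ) (1/2), g t = 1) (hg0 : ∀ t : ℝ, 1 ≤ t → g t = 0)
    (xs : ℕ → Evec n) (as : ℕ → ℝ) (φs : ℕ → ℝ → Evec n) (x : Evec n) (φ : ℝ → Evec n)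
    (has : ∀ k, as k ∈ Ioc (0:ℝ) 1)
    (hxs : Tendsto xs atTop (𝓝 x)) (has0 : Tendsto as atTop (𝓝 0))
    (hunif : ∀ K : Set ℝ, K ⊆ Ici 0 → IsCompact K →
      TendstoUniformlyOn (fun k => φs k) φ atTop K)
    (hsol : ∀ k, φs k 0 = xs k ∧ DIsol (Ka nv dv dlam ρ g C1 (as k)) (φs k))
    :
    (∃ L : NNReal, LipschitzOnWith L φ (Ici 0)) ∧ φ 0 = x ∧
      DIsol (Kbar nv dv dlam ρ g C1) φ :=
  stmt14_general nv dv dlam C1 hC1c ρ hρ hρs g hgm xs as φs x φ has hxs has0 hunif hsol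

end
end
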